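/- Let Δ ⊆ ℝ² be the convex hull of (0,0), (1,0), (0,1) and f₂(x,y) = (y/2, 1 − x − y/2). Then f₂∘f₂ is a contraction with respect to the Euclidean metric (Lip(f₂∘f₂) < 1), and the fibre with constant address 2 is the singleton ⋂_{n≥1} f₂ⁿ(Δ) = {(1/4, 1/2)}. -/

import Mathlib

open Set

/-- The Euclidean plane `ℝ²` with the Euclidean norm. -/
abbrev E2 : Type := EuclideanSpace ℝ (Fin 2)

/-- The (smallest) Lipschitz constant of a map. -/
noncomputable def lipConst {X Y : Type*} [PseudoMetricSpace X] [PseudoMetricSpace Y]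
    (g : X → Y) : ℝ :=
  sInf {K : ℝ | 0 ≤ K ∧ ∀ x y, dist (g x) (g y) ≤ K * dist x y}

/-- The Barnsley–Vince map `f₂(x,y) = (y/2, 1 − x − y/2)`. -/
noncomputable def f2 : E2 → E2 :=
  fun v => (WithLp.equiv 2 (Fin 2 → ℝ)).symm ![v 1 / 2, 1 - v 0 - v 1 / 2]

/-- The filled triangle with vertices `(0,0)`, `(1,0)`, `(0,1)`. -/
noncomputable def Δ : Set E2 :=
  convexHull ℝ {(WithLp.equiv 2 (Fin 2 → ℝ)).symm ![0, 0],
    (WithLp.equiv 2 (Fin 2 → ℝ)).symm ![1, 0], (WithLp.equiv 2 (Fin 2 → ℝ)).symm ![0, 1]}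

open Filter Topology Function

/-! `f₂` fixes `p = (1/4, 1/2) ∈ Δ` and `f₂ ∘ f₂` is `3/4`-Lipschitz, so every point of
`f₂^[2m](Δ)` lies within `(3/4)^m · diam Δ` of `p`; a point in all the images is therefore `p`. -/

theorem LipschitzWith.lipConst_le {X Y : Type*} [PseudoMetricSpace X] [PseudoMetricSpace Y]
    {K : NNReal} {g : X → Y} (hg : LipschitzWith K g) : lipConst g ≤ K :=
  csInf_le ⟨0, fun _ hK => hK.1⟩ ⟨K.2, hg.dist_le_mul⟩

section Contraction

variable {X : Type*} [MetricSpace X] {K : NNReal} {h : X → X} {s : Set X} {p q : X}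

theorem ContractingWith.eq_of_eventually_mem_iterate_image (hh : ContractingWith K h)
    (hs : Bornology.IsBounded s) (hp : IsFixedPt h p) (hps : p ∈ s)
    (hq : ∀ᶠ m in atTop, q ∈ h^[m] '' s) : q = p := by
  have hdist : ∀ᶠ m in atTop, dist q p ≤ K ^ m * Metric.diam s := by
    filter_upwards [hq] with m ⟨x, hxs, hxq⟩
    calc dist q p = dist (h^[m] x) (h^[m] p) := by rw [hxq, (hp.iterate m).eq]
      _ ≤ K ^ m * dist x p := by exact_mod_cast (hh.2.iterate m).dist_le_mul x p
      _ ≤ K ^ m * Metric.diam s := by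
        gcongr; exact Metric.dist_le_diam_of_mem hs hxs hps
  have hlim : Tendsto (fun m : ℕ => (K : ℝ) ^ m * Metric.diam s) atTop (𝓝 0) := by
    simpa using (tendsto_pow_atTop_nhds_zero_of_lt_one K.2 hh.1).mul_const (Metric.diam s)
  exact dist_le_zero.1 (ge_of_tendsto hlim hdist)

theorem iInter_iterate_image_eq_singleton {g : X → X} {k : ℕ} (hk : 0 < k)
    (hg : ContractingWith K g^[k]) (hs : Bornology.IsBounded s) (hp : IsFixedPt g p)
    (hps : p ∈ s) : ⋂ n ∈ Ici 1, g^[n] '' s = {p} := by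
  refine Subset.antisymm (fun q hq => ?_) ?_
  · refine hg.eq_of_eventually_mem_iterate_image hs (hp.iterate k) hps ?_
    filter_upwards [eventually_ge_atTop 1] with m hm
    rw [← iterate_mul]
    exact mem_iInter₂.1 hq (k * m) (Nat.one_le_iff_ne_zero.2 (by positivity))
  · rw [singleton_subset_iff, mem_iInter₂]
    exact fun n _ => ⟨p, hps, (hp.iterate n).eq⟩

end Contraction

/-- On differences `(u, v)`, `f₂ ∘ f₂` acts as `(-u/2 - v/4, u/2 - v/4)`, of squared norm
`u²/2 + v²/8 ≤ (3/4)² (u² + v²)`. -/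
theorem lipschitzWith_f2_comp_f2 : LipschitzWith (3 / 4) (f2 ∘ f2) := by
  refine LipschitzWith.of_dist_le_mul fun x y => ?_
  rw [EuclideanSpace.dist_eq, EuclideanSpace.dist_eq]
  simp only [comp_apply, f2, WithLp.equiv_symm_apply, WithLp.ofLp_toLp,
    Fin.sum_univ_two, Matrix.cons_val_zero, Matrix.cons_val_one, Real.dist_eq, sq_abs]
  push_cast
  rw [← Real.sqrt_sq (by norm_num : (0 : ℝ) ≤ 3 / 4), ← Real.sqrt_mul (by norm_num)]
  exact Real.sqrt_le_sqrt (by nlinarith [sq_nonneg (x 0 - y 0), sq_nonneg (x 1 - y 1)])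

theorem isFixedPt_f2 :
    IsFixedPt f2 ((WithLp.equiv 2 (Fin 2 → ℝ)).symm ![1 / 4, 1 / 2]) := by
  unfold IsFixedPt
  ext i
  fin_cases i <;> norm_num [f2]

theorem isBounded_Δ : Bornology.IsBounded Δ :=
  ((toFinite _).isCompact_convexHull ℝ).isBounded

/-- `(1/4, 1/2)` is the midpoint of `(0,1)` and of the midpoint of `(0,0)` and `(1,0)`. -/
theorem fixedPt_f2_mem_Δ : (WithLp.equiv 2 (Fin 2 → ℝ)).symm ![1 / 4, 1 / 2] ∈ Δ := by
  have hΔ : Convex ℝ Δ := convex_convexHull ℝ _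
  have hm := hΔ.segment_subset (subset_convexHull ℝ _ (by simp))
    (subset_convexHull ℝ _ (by simp)) (midpoint_mem_segment
      ((WithLp.equiv 2 (Fin 2 → ℝ)).symm ![0, 0]) ((WithLp.equiv 2 (Fin 2 → ℝ)).symm ![1, 0]))
  have h := hΔ.segment_subset (subset_convexHull ℝ _ (by simp)) hm
    (midpoint_mem_segment ((WithLp.equiv 2 (Fin 2 → ℝ)).symm ![0, 1]) _)
  convert h using 1
  ext i
  fin_cases i <;> norm_num [midpoint_eq_smul_add]

/-- `f₂∘f₂` is a contraction w.r.t. the Euclidean metric, and the fibre with constant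
address `2` is the singleton `{(1/4, 1/2)}`. -/
theorem fibre_constant_two :
    lipConst (f2 ∘ f2) < 1 ∧
    (⋂ n ∈ Set.Ici 1, f2^[n] '' Δ) =
      {(WithLp.equiv 2 (Fin 2 → ℝ)).symm ![1 / 4, 1 / 2]} := by
  have hcontr : ContractingWith (3 / 4) f2^[2] :=
    ⟨by norm_num, lipschitzWith_f2_comp_f2⟩
  refine ⟨?_, iInter_iterate_image_eq_singleton two_pos hcontr isBounded_Δ isFixedPt_f2
    fixedPt_f2_mem_Δ⟩
  calc lipConst (f2 ∘ f2) ≤ (3 / 4 : NNReal) := lipschitzWith_f2_comp_f2.lipConst_le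
    _ < 1 := by norm_num
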